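/- arXiv:1612.01500 — 2 statements merged into one kernel-verified Lean document; each statement's English description precedes it below -/
import Mathlib

section
/- Let $d, g, r \geq 1$ be integers with $r \cdot d < g + d$, let $a_{d-1} \geq 0$ and $a_d \geq 1$ be natural numbers, and let $T$ be a nonempty finite index set with natural numbers $g_\mu \geq 1$ and $b_\mu \geq 1$ for each $\mu \in T$. Suppose $(a_d)^r = \sum_{\mu \in T} b_\mu$ and $r \cdot a_{d-1} \cdot (a_d)^{r-1} \geq \sum_{\mu \in T} 2 g_\mu b_\mu$. Then $(g + d) \cdot a_{d-1} > 2 d \cdot a_d$. -/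
open Finset

/-
Since every `g_μ ≥ 1`, the second relation gives `r a_{d-1} a_d^{r-1} ≥ 2 ∑ b_μ = 2 a_d^r`, and
cancelling `a_d^{r-1}` yields `r a_{d-1} ≥ 2 a_d`. In particular `a_{d-1} ≥ 1`, so
`rd < g + d` gives `(g + d) a_{d-1} > rd a_{d-1} ≥ 2d a_d`.
-/

theorem Nat.mul_le_of_mul_pow_le_mul_mul_pow_pred {a b c n : ℕ} (ha : 0 < a)
    (h : c * a ^ n ≤ n * b * a ^ (n - 1)) : c * a ≤ n * b := by
  cases n with
  | zero => simp_all
  | succ n =>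
    rw [Nat.add_sub_cancel, pow_succ, ← mul_assoc, mul_right_comm] at h
    exact Nat.le_of_mul_le_mul_right h (pow_pos ha n)

theorem Finset.sum_le_sum_mul_of_one_le {ι : Type*} (s : Finset ι) {f g : ι → ℕ}
    (hf : ∀ i ∈ s, 1 ≤ f i) : ∑ i ∈ s, g i ≤ ∑ i ∈ s, f i * g i :=
  sum_le_sum fun i hi => Nat.le_mul_of_pos_left _ (hf i hi)

theorem stmt_7_general {ι : Type*} (d g r : ℕ)
    (hrd : r * d < g + d) (ad1 ad : ℕ) (had : 1 ≤ ad)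
    (T : Finset ι) (gm bm : ι → ℕ)
    (hgm : ∀ μ ∈ T, 1 ≤ gm μ)
    (hsum : ad ^ r = ∑ μ ∈ T, bm μ)
    (hineq : r * ad1 * ad ^ (r - 1) ≥ ∑ μ ∈ T, 2 * gm μ * bm μ) :
    (g + d) * ad1 > 2 * d * ad := by
  have hpow : 2 * ad ^ r ≤ r * ad1 * ad ^ (r - 1) := calc
    2 * ad ^ r = 2 * ∑ μ ∈ T, bm μ := by rw [hsum]
    _ ≤ 2 * ∑ μ ∈ T, gm μ * bm μ := Nat.mul_le_mul_left 2 (T.sum_le_sum_mul_of_one_le hgm)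
    _ = ∑ μ ∈ T, 2 * gm μ * bm μ := by simp only [mul_sum, mul_assoc]
    _ ≤ r * ad1 * ad ^ (r - 1) := hineq
  have hcancel : 2 * ad ≤ r * ad1 := Nat.mul_le_of_mul_pow_le_mul_mul_pow_pred had hpow
  have had1 : 0 < ad1 := Nat.pos_of_ne_zero fun h => by simp [h] at hcancel; omega
  calc 2 * d * ad = d * (2 * ad) := by ring
    _ ≤ d * (r * ad1) := Nat.mul_le_mul_left d hcancel
    _ = r * d * ad1 := by ring
    _ < (g + d) * ad1 := Nat.mul_lt_mul_of_pos_right hrd had1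

/-- Let `d, g, r ≥ 1` be integers with `r*d < g + d`, let `a_{d-1} ≥ 0`,
`a_d ≥ 1` be naturals, and let `T` be a nonempty finite index set with naturals
`g_μ ≥ 1` and `b_μ ≥ 1`. Suppose `(a_d)^r = ∑_μ b_μ` and
`r * a_{d-1} * (a_d)^(r-1) ≥ ∑_μ 2 g_μ b_μ`. Then `(g + d) * a_{d-1} > 2d * a_d`. -/
theorem stmt_7 {ι : Type*} (d g r : ℕ) (hd : 1 ≤ d) (hg : 1 ≤ g) (hr : 1 ≤ r)
    (hrd : r * d < g + d) (ad1 ad : ℕ) (had : 1 ≤ ad)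
    (T : Finset ι) (hT : T.Nonempty) (gm bm : ι → ℕ)
    (hgm : ∀ μ ∈ T, 1 ≤ gm μ) (hbm : ∀ μ ∈ T, 1 ≤ bm μ)
    (hsum : ad ^ r = ∑ μ ∈ T, bm μ)
    (hineq : r * ad1 * ad ^ (r - 1) ≥ ∑ μ ∈ T, 2 * gm μ * bm μ) :
    (g + d) * ad1 > 2 * d * ad :=
  stmt_7_general d g r hrd ad1 ad had T gm bm hgm hsum hineq
end

section
/- Let $d, g, r \geq 1$ be integers with $g < r d < g + d$. Let $h \in \mathbb{Z}[T, T^{-1}]$ have nonnegative coefficients with $h_\nu = 0$ for $|\nu| > d$ and $h_d > 0$. Suppose there is a finite index set $M$, integers $g_\mu \geq 1$ and Laurent polynomials $p_\mu \in \mathbb{Z}[T, T^{-1}]$ with nonnegative coefficients such that $h^r = \sum_{\mu \in M} (T + 2 + T^{-1})^{g_\mu} \cdot p_\mu$, where each summand $(T + 2 + T^{-1})^{g_\mu} \cdot p_\mu$ has vanishing coefficients in all degrees $> r d$. Then $(g + d) \cdot h_{d-1} > 2 d \cdot h_d$. -/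
/-!
Write each summand as `(T + 2 + T⁻¹) q` with `q = (T + 2 + T⁻¹)^(g_μ - 1) p_μ ≥ 0`. Since it
vanishes in degree `rd + 1`, nonnegativity forces `q_{rd} = q_{rd+1} = 0`, and then its
coefficient in degree `rd - 1` is at least twice the one in degree `rd`. Summing over `μ`, the
same holds for `h^r`, whose top coefficients are `h_d^r` and `r h_d^(r-1) h_{d-1}`; hence
`r h_{d-1} ≥ 2 h_d`, and `rd < g + d` finishes the argument.
-/

open LaurentPolynomial Finset

namespace LaurentPolynomial

variable {R : Type*}

section Semiring

variable [Semiring R]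

def CoeffsVanishAbove (f : R[T;T⁻¹]) (a : ℤ) : Prop :=
  ∀ ν, a < ν → f.coeff ν = 0

lemma coeff_mul_eq_sum_of_support_subset (f q : R[T;T⁻¹]) {s : Finset ℤ}
    (hs : f.coeff.support ⊆ s) (x : ℤ) :
    (f * q).coeff x = ∑ k ∈ s, f.coeff k * q.coeff (x - k) := by
  rw [AddMonoidAlgebra.coeff_mul_apply_left, Finsupp.sum_of_support_subset _ hs]
  · simp only [neg_add_eq_sub]
  · simp

lemma coeff_T_add_two_add_T_mul (q : R[T;T⁻¹]) (n : ℤ) :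
    ((T 1 + 2 + T (-1)) * q).coeff n = q.coeff (n - 1) + 2 * q.coeff n + q.coeff (n + 1) := by
  simp only [add_mul, two_mul, T, AddMonoidAlgebra.coeff_add, Finsupp.add_apply,
    AddMonoidAlgebra.coeff_single_mul_apply, one_mul, neg_neg, neg_add_eq_sub, add_comm (1 : ℤ)]

namespace CoeffsVanishAbove

variable {f q : R[T;T⁻¹]} {a b : ℤ}

lemma coeff_mul_eq_sum_Icc (hf : CoeffsVanishAbove f a) (hq : CoeffsVanishAbove q b) (x : ℤ) :
    (f * q).coeff x = ∑ k ∈ Icc (x - b) a, f.coeff k * q.coeff (x - k) := by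
  classical
  rw [coeff_mul_eq_sum_of_support_subset f q subset_union_left]
  refine (sum_subset subset_union_right fun k _ hk => ?_).symm
  rcases lt_or_ge a k with hak | hka
  · rw [hf k hak, zero_mul]
  · rw [hq (x - k) (by simp_all; omega), mul_zero]

lemma mul (hf : CoeffsVanishAbove f a) (hq : CoeffsVanishAbove q b) :
    CoeffsVanishAbove (f * q) (a + b) := fun x hx => by
  rw [hf.coeff_mul_eq_sum_Icc hq, Icc_eq_empty (by omega), sum_empty]

lemma coeff_mul_add (hf : CoeffsVanishAbove f a) (hq : CoeffsVanishAbove q b) :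
    (f * q).coeff (a + b) = f.coeff a * q.coeff b := by
  rw [hf.coeff_mul_eq_sum_Icc hq, add_sub_cancel_right, Icc_self, sum_singleton,
    add_sub_cancel_left]

lemma coeff_mul_add_sub_one (hf : CoeffsVanishAbove f a) (hq : CoeffsVanishAbove q b) :
    (f * q).coeff (a + b - 1) = f.coeff (a - 1) * q.coeff b + f.coeff a * q.coeff (b - 1) := by
  rw [hf.coeff_mul_eq_sum_Icc hq, show a + b - 1 - b = a - 1 by ring,
    show Icc (a - 1) a = {a - 1, a} by ext; simp; omega, sum_pair (by omega)]
  congr 3 <;> ring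

end CoeffsVanishAbove

end Semiring

section CommSemiring

variable [CommSemiring R] {f : R[T;T⁻¹]} {a : ℤ}

namespace CoeffsVanishAbove

lemma pow (hf : CoeffsVanishAbove f a) (n : ℕ) : CoeffsVanishAbove (f ^ n) (n * a) := by
  induction n with
  | zero =>
    intro ν hν
    rw [pow_zero, ← T_zero, T_apply, if_neg (by simp_all; omega)]
  | succ n ih => simpa [pow_succ, add_mul] using ih.mul hf

lemma coeff_pow_mul (hf : CoeffsVanishAbove f a) (n : ℕ) :
    (f ^ n).coeff (n * a) = f.coeff a ^ n := by
  induction n with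
  | zero => simp
  | succ n ih =>
    rw [pow_succ, Nat.cast_succ, add_one_mul, (hf.pow n).coeff_mul_add hf, ih, pow_succ]

lemma coeff_pow_mul_sub_one (hf : CoeffsVanishAbove f a) (n : ℕ) :
    (f ^ n).coeff (n * a - 1) = n * f.coeff a ^ (n - 1) * f.coeff (a - 1) := by
  induction n with
  | zero => simp [← T_zero]
  | succ n ih =>
    rw [pow_succ, Nat.cast_succ, add_one_mul, (hf.pow n).coeff_mul_add_sub_one hf, ih,
      coeff_pow_mul hf]
    rcases n with _ | n
    · simp
    · push_cast
      ring

end CoeffsVanishAbove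

end CommSemiring

section OrderedSemiring

variable (R) [Semiring R] [PartialOrder R] [IsOrderedRing R]

def nonnegCoeffs : Subsemiring R[T;T⁻¹] where
  carrier := {f | ∀ ν, 0 ≤ f.coeff ν}
  zero_mem' _ := le_rfl
  add_mem' hf hq ν := add_nonneg (hf ν) (hq ν)
  one_mem' ν := by
    rw [← T_zero, T_apply]
    split_ifs <;> simp
  mul_mem' {f q} hf hq x := by
    rw [AddMonoidAlgebra.coeff_mul_apply_left]
    exact Finsupp.sum_nonneg fun k _ => mul_nonneg (hf k) (hq _)

variable {R}

lemma T_mem_nonnegCoeffs (n : ℤ) : (T n : R[T;T⁻¹]) ∈ nonnegCoeffs R := fun ν => by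
  rw [T_apply]
  split_ifs <;> simp

lemma T_add_two_add_T_mem_nonnegCoeffs : (T 1 + 2 + T (-1) : R[T;T⁻¹]) ∈ nonnegCoeffs R :=
  add_mem (add_mem (T_mem_nonnegCoeffs 1) (ofNat_mem _ 2)) (T_mem_nonnegCoeffs (-1))

end OrderedSemiring

section OrderedRing

variable [CommRing R] [LinearOrder R] [IsStrictOrderedRing R]

/-- The nonnegativity of `q` forces `q_N = q_{N+1} = 0`, so the two coefficients compared are
`q_{N-1}` and `q_{N-2} + 2 q_{N-1}`. -/
lemma two_mul_coeff_le_coeff_sub_one_of_coeff_add_one_eq_zero {q : R[T;T⁻¹]}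
    (hq : q ∈ nonnegCoeffs R) {N : ℤ} (hN : ((T 1 + 2 + T (-1)) * q).coeff (N + 1) = 0) :
    2 * ((T 1 + 2 + T (-1)) * q).coeff N ≤ ((T 1 + 2 + T (-1)) * q).coeff (N - 1) := by
  simp only [coeff_T_add_two_add_T_mul, add_sub_cancel_right, sub_add_cancel] at hN ⊢
  linarith [hq N, hq (N + 1), hq (N + 1 + 1), hq (N - 1 - 1)]

lemma two_mul_coeff_pow_mul_le_coeff_sub_one {k : ℕ} (hk : 1 ≤ k) {p : R[T;T⁻¹]}
    (hp : p ∈ nonnegCoeffs R) {N : ℤ} (hN : ((T 1 + 2 + T (-1)) ^ k * p).coeff (N + 1) = 0) :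
    2 * ((T 1 + 2 + T (-1)) ^ k * p).coeff N ≤ ((T 1 + 2 + T (-1)) ^ k * p).coeff (N - 1) := by
  obtain ⟨j, rfl⟩ := Nat.exists_eq_add_of_le' hk
  rw [pow_succ', mul_assoc] at hN ⊢
  exact two_mul_coeff_le_coeff_sub_one_of_coeff_add_one_eq_zero
    (mul_mem (pow_mem T_add_two_add_T_mem_nonnegCoeffs j) hp) hN

end OrderedRing

end LaurentPolynomial

theorem stmt_9_general {ι : Type*} (d g r : ℕ) (hr : 1 ≤ r)
    (hrdg : r * d < g + d)
    (h : ℤ[T;T⁻¹])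
    (hvanish : ∀ ν : ℤ, (d : ℤ) < |ν| → h.coeff ν = 0) (htop : 0 < h.coeff d)
    (M : Finset ι) (gm : ι → ℕ) (hgm : ∀ μ ∈ M, 1 ≤ gm μ)
    (p : ι → ℤ[T;T⁻¹]) (hp : ∀ μ ∈ M, ∀ ν : ℤ, 0 ≤ (p μ).coeff ν)
    (hdecomp : h ^ r = ∑ μ ∈ M, (T 1 + 2 + T (-1) : ℤ[T;T⁻¹]) ^ gm μ * p μ)
    (hbound : ∀ μ ∈ M, ∀ n : ℤ, (r * d : ℤ) < n →
      ((T 1 + 2 + T (-1) : ℤ[T;T⁻¹]) ^ gm μ * p μ).coeff n = 0) :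
    ((g : ℤ) + d) * h.coeff ((d : ℤ) - 1) > 2 * d * h.coeff d := by
  have hh : CoeffsVanishAbove h d := fun ν hν => hvanish ν (hν.trans_le (le_abs_self ν))
  have hsum : 2 * (h ^ r).coeff (r * d) ≤ (h ^ r).coeff (r * d - 1) := by
    simp only [hdecomp, AddMonoidAlgebra.coeff_sum, Finsupp.finsetSum_apply, mul_sum]
    exact sum_le_sum fun μ hμ => two_mul_coeff_pow_mul_le_coeff_sub_one (hgm μ hμ) (hp μ hμ)
      (hbound μ hμ _ (lt_add_one _))
  rw [hh.coeff_pow_mul, hh.coeff_pow_mul_sub_one, ← pow_sub_one_mul (by omega : r ≠ 0)] at hsum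
  have hlin : 2 * h.coeff d ≤ r * h.coeff (d - 1) :=
    le_of_mul_le_mul_left (by linear_combination hsum) (pow_pos htop (r - 1))
  have hpos : 0 < h.coeff (d - 1) :=
    pos_of_mul_pos_right (a := (r : ℤ)) (by linarith) r.cast_nonneg
  calc ((g : ℤ) + d) * h.coeff (d - 1) > r * d * h.coeff (d - 1) := by
        gcongr; exact_mod_cast hrdg
    _ = d * (r * h.coeff (d - 1)) := by ring
    _ ≥ d * (2 * h.coeff d) := by gcongr
    _ = 2 * d * h.coeff d := by ring

/-- Let `d, g, r ≥ 1` be integers with `g < rd < g + d`. Let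
`h ∈ ℤ[T,T⁻¹]` have nonnegative coefficients with `h_ν = 0` for `|ν| > d` and
`h_d > 0`. Suppose there is a finite index set `M`, integers `g_μ ≥ 1` and Laurent
polynomials `p_μ` with nonnegative coefficients such that
`h^r = ∑_μ (T + 2 + T⁻¹)^(g_μ) * p_μ`, where each summand has vanishing coefficients
in all degrees `> rd`. Then `(g + d) * h_{d-1} > 2d * h_d`. -/
theorem stmt_9 {ι : Type*} (d g r : ℕ) (hd : 1 ≤ d) (hg : 1 ≤ g) (hr : 1 ≤ r)
    (hgrd : g < r * d) (hrdg : r * d < g + d)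
    (h : ℤ[T;T⁻¹]) (hnonneg : ∀ ν : ℤ, 0 ≤ h.coeff ν)
    (hvanish : ∀ ν : ℤ, (d : ℤ) < |ν| → h.coeff ν = 0) (htop : 0 < h.coeff d)
    (M : Finset ι) (gm : ι → ℕ) (hgm : ∀ μ ∈ M, 1 ≤ gm μ)
    (p : ι → ℤ[T;T⁻¹]) (hp : ∀ μ ∈ M, ∀ ν : ℤ, 0 ≤ (p μ).coeff ν)
    (hdecomp : h ^ r = ∑ μ ∈ M, (T 1 + 2 + T (-1) : ℤ[T;T⁻¹]) ^ gm μ * p μ)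
    (hbound : ∀ μ ∈ M, ∀ n : ℤ, (r * d : ℤ) < n →
      ((T 1 + 2 + T (-1) : ℤ[T;T⁻¹]) ^ gm μ * p μ).coeff n = 0) :
    ((g : ℤ) + d) * h.coeff ((d : ℤ) - 1) > 2 * d * h.coeff d :=
  stmt_9_general d g r hr hrdg h hvanish htop M gm hgm p hp hdecomp hbound
end
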